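/- (Exact greedy on a k-system.) Let f be a non-negative monotone submodular function on 2^N and (N, I) a k-system. If S is the output of the greedy algorithm that repeatedly adds the element with the largest marginal gain among those keeping the set in I (stopping when none exists), then for every C ∈ I: (k+1)·f(S) ≥ f(S ∪ C), and hence f(S) ≥ f(C)/(k+1). -/

import Mathlib

/-!
Let `S_i` be the set of the first `i` greedy elements and `g_i = f(S_{i+1}) - f(S_i)`. The greedy
rule and submodularity make `g` nonincreasing. Charge each `c ∈ C \ S` to the last step `i` at
which `S_i ∪ {c}` is still independent; by submodularity its marginal value on `S` is at most
`g_i`. The elements charged to the first `j` steps cannot be added to `S_j`, which is therefore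
maximal in their union with `S_j`, so the `k`-system bound leaves at most `k j` of them. Abel
summation turns this into a total charge of at most `k ∑ g_i = k (f(S) - f(∅))`.
-/

def Submodular {α : Type*} [DecidableEq α] (f : Finset α → ℝ) : Prop :=
  ∀ A B : Finset α, A ⊆ B → ∀ e ∉ B,
    f (insert e B) - f B ≤ f (insert e A) - f A

def MaximalIn {α : Type*} [DecidableEq α] (I : Finset α → Prop)
    (S A : Finset α) : Prop :=
  A ⊆ S ∧ I A ∧ ∀ e ∈ S, e ∉ A → ¬ I (insert e A)

def IsKSystem {α : Type*} [DecidableEq α] (k : ℕ) (I : Finset α → Prop) : Prop :=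
  I ∅ ∧ (∀ A B : Finset α, A ⊆ B → I B → I A) ∧
  (∀ S A B : Finset α, MaximalIn I S A → MaximalIn I S B → A.card ≤ k * B.card)

open Finset

section KSystem

variable {α : Type*} [DecidableEq α] {I : Finset α → Prop}

theorem exists_maximalIn_superset {G A : Finset α} (hAG : A ⊆ G) (hA : I A) :
    ∃ B, A ⊆ B ∧ MaximalIn I G B := by
  classical
  obtain ⟨B, hBmem, hBmax⟩ := exists_max_image (G.powerset.filter fun D => A ⊆ D ∧ I D)
    card ⟨A, by simp [hAG, hA]⟩
  simp only [mem_filter, mem_powerset] at hBmem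
  obtain ⟨hBG, hAB, hB⟩ := hBmem
  refine ⟨B, hAB, hBG, hB, fun x hxG hxB hIx => ?_⟩
  have h := hBmax (insert x B) <| by
    simp only [mem_filter, mem_powerset]
    exact ⟨insert_subset hxG hBG, hAB.trans (subset_insert _ _), hIx⟩
  rw [card_insert_of_notMem hxB] at h
  omega

/-- `A` is maximal in `A ∪ D`, so any maximal extension of `D` there is at most `k` times larger. -/
theorem IsKSystem.card_le_mul_card {k : ℕ} (hI : IsKSystem k I) {A D : Finset α}
    (hA : I A) (hD : I D) (hDA : ∀ x ∈ D, x ∉ A → ¬ I (insert x A)) :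
    #D ≤ k * #A := by
  obtain ⟨B, hDB, hB⟩ := exists_maximalIn_superset (subset_union_right (s₁ := A)) hD
  have hAmax : MaximalIn I (A ∪ D) A := ⟨subset_union_left, hA, fun x hx hxA =>
    hDA x ((mem_union.mp hx).resolve_left hxA) hxA⟩
  exact (card_le_card hDB).trans (hI.2.2 _ B A hB hAmax)

end KSystem

section Submodular

variable {α : Type*} [DecidableEq α] {f : Finset α → ℝ}

theorem Submodular.sub_le_sub_of_subset (hsub : Submodular f) (hmono : Monotone f)
    {A B : Finset α} (hAB : A ⊆ B) (x : α) :
    f (insert x B) - f B ≤ f (insert x A) - f A := by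
  by_cases hx : x ∈ B
  · rw [insert_eq_of_mem hx, sub_self, sub_nonneg]
    exact hmono (subset_insert x A)
  · exact hsub A B hAB x hx

theorem Submodular.le_add_sum_sdiff (hsub : Submodular f) (A B : Finset α) :
    f (A ∪ B) ≤ f A + ∑ c ∈ B \ A, (f (insert c A) - f A) := by
  induction B using Finset.induction_on with
  | empty => simp
  | @insert x B hx ih =>
    by_cases hxA : x ∈ A
    · rwa [union_insert, insert_eq_of_mem (mem_union_left _ hxA), insert_sdiff_of_mem _ hxA]
    · rw [union_insert, insert_sdiff_of_notMem _ hxA, sum_insert (by simp [hx])]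
      have := hsub A (A ∪ B) subset_union_left x (by simp [hxA, hx])
      linarith

end Submodular

/-- Abel summation. -/
theorem sum_mul_le_mul_sum_of_partial_sum_le {m : ℕ} {k : ℝ} {g n : ℕ → ℝ}
    (hg_nonneg : 0 ≤ g (m - 1)) (hg_anti : ∀ i, i + 1 < m → g (i + 1) ≤ g i)
    (hn : ∀ j ≤ m, ∑ i ∈ range j, n i ≤ k * j) :
    ∑ i ∈ range m, g i * n i ≤ k * ∑ i ∈ range m, g i := by
  have hgn := sum_range_by_parts g n m
  have hgk := sum_range_by_parts g (fun _ => k) m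
  simp only [smul_eq_mul, sum_const, card_range, nsmul_eq_mul] at hgn hgk
  rw [hgn, mul_comm k, sum_mul, hgk]
  have hlast : g (m - 1) * ∑ i ∈ range m, n i ≤ g (m - 1) * (m * k) :=
    mul_le_mul_of_nonneg_left (by linarith [hn m le_rfl]) hg_nonneg
  have hterms : ∑ i ∈ range (m - 1), (g (i + 1) - g i) * ((i + 1 : ℕ) * k)
      ≤ ∑ i ∈ range (m - 1), (g (i + 1) - g i) * ∑ j ∈ range (i + 1), n j := by
    refine sum_le_sum fun i hi => mul_le_mul_of_nonpos_left ?_ ?_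
    · linarith [hn (i + 1) (by grind)]
    · linarith [hg_anti i (by grind)]
  linarith

theorem sum_comp_le_mul_sum {β : Type*} (s : Finset β) (t : β → ℕ) {m : ℕ} {k : ℝ}
    {g : ℕ → ℝ} (ht : ∀ c ∈ s, t c < m)
    (hg_nonneg : 0 ≤ g (m - 1)) (hg_anti : ∀ i, i + 1 < m → g (i + 1) ≤ g i)
    (hcount : ∀ j ≤ m, (#(s.filter fun c => t c < j) : ℝ) ≤ k * j) :
    ∑ c ∈ s, g (t c) ≤ k * ∑ i ∈ range m, g i := by
  set n : ℕ → ℝ := fun i => #(s.filter fun c => t c = i)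
  have hfiber : ∑ c ∈ s, g (t c) = ∑ i ∈ range m, g i * n i := by
    rw [← sum_fiberwise_of_maps_to (fun c hc => mem_range.mpr (ht c hc))]
    refine sum_congr rfl fun i _ => ?_
    rw [sum_congr rfl fun c hc => congrArg g (mem_filter.mp hc).2, sum_const, nsmul_eq_mul,
      mul_comm]
  have hpartial : ∀ j, ∑ i ∈ range j, n i = #(s.filter fun c => t c < j) := by
    intro j
    rw [card_eq_sum_card_fiberwise (f := t) (t := range j) fun c hc => mem_range.mpr (mem_filter.mp hc).2]
    push_cast
    refine sum_congr rfl fun i hi => ?_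
    rw [filter_filter, filter_congr fun c _ => and_iff_right_of_imp fun h => h ▸ mem_range.mp hi]
  rw [hfiber]
  exact sum_mul_le_mul_sum_of_partial_sum_le hg_nonneg hg_anti fun j hj => hpartial j ▸ hcount j hj

section Greedy

variable {α : Type*} [DecidableEq α] {I : Finset α → Prop} {f : Finset α → ℝ} {e : ℕ → α}
  {m : ℕ}

def prefixSet (e : ℕ → α) (i : ℕ) : Finset α := (range i).image e

def greedyGain (f : Finset α → ℝ) (e : ℕ → α) (i : ℕ) : ℝ :=
  f (insert (e i) (prefixSet e i)) - f (prefixSet e i)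

open Classical in
noncomputable def lastInsertable (I : Finset α → Prop) (e : ℕ → α) (m : ℕ) (c : α) : ℕ :=
  Nat.findGreatest (fun i => I (insert c (prefixSet e i))) m

theorem prefixSet_mono : Monotone (prefixSet e) :=
  fun _ _ h => image_subset_image (range_subset_range.mpr h)

theorem prefixSet_succ (i : ℕ) : prefixSet e (i + 1) = insert (e i) (prefixSet e i) := by
  simp [prefixSet, range_add_one, image_insert]

theorem card_prefixSet_le (i : ℕ) : #(prefixSet e i) ≤ i :=
  card_image_le.trans (card_range i).le

theorem sum_greedyGain (m : ℕ) :
    ∑ i ∈ range m, greedyGain f e i = f (prefixSet e m) - f ∅ := by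
  simp only [greedyGain, ← prefixSet_succ]
  exact sum_range_sub (fun i => f (prefixSet e i)) m

theorem greedyGain_nonneg (hmono : Monotone f) (i : ℕ) : 0 ≤ greedyGain f e i :=
  sub_nonneg.mpr (hmono (subset_insert _ _))

theorem marginal_le_greedyGain (hsub : Submodular f) (hmono : Monotone f)
    (hgreedy : ∀ i < m, ∀ x, I (insert x (prefixSet e i)) →
      f (insert x (prefixSet e i)) - f (prefixSet e i) ≤ greedyGain f e i)
    {i j : ℕ} (hi : i < m) (hij : i ≤ j) {c : α} (hc : I (insert c (prefixSet e i))) :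
    f (insert c (prefixSet e j)) - f (prefixSet e j) ≤ greedyGain f e i :=
  (hsub.sub_le_sub_of_subset hmono (prefixSet_mono hij) c).trans (hgreedy i hi c hc)

theorem greedyGain_succ_le (hdown : ∀ A B : Finset α, A ⊆ B → I B → I A)
    (hsub : Submodular f) (hmono : Monotone f) (hindep : I (prefixSet e m))
    (hgreedy : ∀ i < m, ∀ x, I (insert x (prefixSet e i)) →
      f (insert x (prefixSet e i)) - f (prefixSet e i) ≤ greedyGain f e i)
    {i : ℕ} (hi : i + 1 < m) : greedyGain f e (i + 1) ≤ greedyGain f e i := by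
  have hmem : e (i + 1) ∈ prefixSet e m := mem_image_of_mem e (mem_range.mpr hi)
  refine marginal_le_greedyGain hsub hmono hgreedy (by omega) (Nat.le_succ i) ?_
  exact hdown _ _ (insert_subset hmem (prefixSet_mono (by omega))) hindep

theorem indep_insert_prefixSet_lastInsertable {c : α} (hc : I {c}) :
    I (insert c (prefixSet e (lastInsertable I e m c))) := by
  classical
  exact Nat.findGreatest_spec (P := fun i => I (insert c (prefixSet e i))) (Nat.zero_le m)
    (by simpa [prefixSet] using hc)

theorem lastInsertable_lt {c : α} (hc : I {c}) (hcm : ¬ I (insert c (prefixSet e m))) :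
    lastInsertable I e m c < m := by
  classical
  exact (Nat.findGreatest_le m).lt_of_ne fun h => hcm (h ▸ indep_insert_prefixSet_lastInsertable hc)

theorem not_indep_insert_prefixSet_of_lastInsertable_lt {c : α} {j : ℕ}
    (h : lastInsertable I e m c < j) (hj : j ≤ m) : ¬ I (insert c (prefixSet e j)) := by
  classical
  exact Nat.findGreatest_is_greatest h hj

theorem card_filter_lastInsertable_lt_le {k : ℕ} (hI : IsKSystem k I)
    (hindep : I (prefixSet e m)) {C : Finset α} (hC : I C) {j : ℕ} (hj : j ≤ m) :
    #(C.filter fun c => lastInsertable I e m c < j) ≤ k * j :=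
  calc #(C.filter fun c => lastInsertable I e m c < j)
      ≤ k * #(prefixSet e j) :=
        hI.card_le_mul_card (hI.2.1 _ _ (prefixSet_mono hj) hindep)
          (hI.2.1 _ _ (filter_subset _ _) hC)
          fun _ hx _ => not_indep_insert_prefixSet_of_lastInsertable_lt (mem_filter.mp hx).2 hj
    _ ≤ k * j := Nat.mul_le_mul_left k (card_prefixSet_le j)

theorem greedy_union_le {k : ℕ} (hI : IsKSystem k I) (hsub : Submodular f)
    (hmono : Monotone f) (hindep : I (prefixSet e m))
    (hstop : ∀ x ∉ prefixSet e m, ¬ I (insert x (prefixSet e m)))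
    (hgreedy : ∀ i < m, ∀ x, I (insert x (prefixSet e i)) →
      f (insert x (prefixSet e i)) - f (prefixSet e i) ≤ greedyGain f e i)
    {C : Finset α} (hC : I C) :
    f (prefixSet e m ∪ C) ≤ f (prefixSet e m) + k * (f (prefixSet e m) - f ∅) := by
  set S := prefixSet e m
  set t := lastInsertable I e m
  have hC' : I (C \ S) := hI.2.1 _ _ sdiff_subset hC
  have hsingle : ∀ c ∈ C \ S, I {c} := fun c hc => hI.2.1 _ _ (singleton_subset_iff.mpr hc) hC'
  have ht : ∀ c ∈ C \ S, t c < m :=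
    fun c hc => lastInsertable_lt (hsingle c hc) (hstop c (mem_sdiff.mp hc).2)
  have hcharge : ∀ c ∈ C \ S, f (insert c S) - f S ≤ greedyGain f e (t c) :=
    fun c hc => marginal_le_greedyGain hsub hmono hgreedy (ht c hc) (ht c hc).le
      (indep_insert_prefixSet_lastInsertable (hsingle c hc))
  have hsum : ∑ c ∈ C \ S, greedyGain f e (t c) ≤ k * ∑ i ∈ range m, greedyGain f e i :=
    sum_comp_le_mul_sum _ t ht (greedyGain_nonneg hmono _)
      (fun _ hi => greedyGain_succ_le hI.2.1 hsub hmono hindep hgreedy hi)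
      fun _ hj => by exact_mod_cast card_filter_lastInsertable_lt_le hI hindep hC' hj
  calc f (S ∪ C) ≤ f S + ∑ c ∈ C \ S, (f (insert c S) - f S) := hsub.le_add_sum_sdiff S C
    _ ≤ f S + k * ∑ i ∈ range m, greedyGain f e i := by linarith [sum_le_sum hcharge]
    _ = f S + k * (f S - f ∅) := by rw [sum_greedyGain]

end Greedy

theorem stmt8_general {α : Type*} [DecidableEq α] (k : ℕ) (I : Finset α → Prop)
    (hI : IsKSystem k I)
    (f : Finset α → ℝ) (hnn : ∀ S : Finset α, 0 ≤ f S)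
    (hmono : ∀ A B : Finset α, A ⊆ B → f A ≤ f B) (hsub : Submodular f)
    (m : ℕ) (e : ℕ → α)
    (hSfeas : I ((Finset.range m).image e))
    (hstop : ∀ x : α, x ∉ (Finset.range m).image e →
      ¬ I (insert x ((Finset.range m).image e)))
    (hgreedy : ∀ i < m, ∀ x : α, I (insert x ((Finset.range i).image e)) →
      f (insert x ((Finset.range i).image e)) - f ((Finset.range i).image e) ≤
      f (insert (e i) ((Finset.range i).image e)) - f ((Finset.range i).image e))
    (C : Finset α) (hC : I C) :
    f ((Finset.range m).image e ∪ C) ≤ ((k : ℝ) + 1) * f ((Finset.range m).image e) ∧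
    f C / ((k : ℝ) + 1) ≤ f ((Finset.range m).image e) := by
  have hunion : f (prefixSet e m ∪ C) ≤ f (prefixSet e m) + k * (f (prefixSet e m) - f ∅) :=
    greedy_union_le hI hsub (fun A B h => hmono A B h) hSfeas hstop hgreedy hC
  have hbound : f (prefixSet e m ∪ C) ≤ ((k : ℝ) + 1) * f (prefixSet e m) := by
    nlinarith [hnn ∅, (Nat.cast_nonneg k : (0 : ℝ) ≤ k)]
  refine ⟨hbound, ?_⟩
  rw [div_le_iff₀ (by positivity), mul_comm]
  exact (hmono _ _ subset_union_right).trans hbound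

/-- Exact greedy on a `k`-system: the output `S` of the greedy algorithm
(adding at each step the element with the largest marginal gain among those
keeping the set independent, stopping when none exists) satisfies
`(k+1)·f(S) ≥ f(S ∪ C)` and hence `f(S) ≥ f(C)/(k+1)` for every `C ∈ I`. -/
theorem stmt8 {α : Type*} [DecidableEq α] (k : ℕ) (I : Finset α → Prop)
    (hI : IsKSystem k I)
    (f : Finset α → ℝ) (hnn : ∀ S : Finset α, 0 ≤ f S)
    (hmono : ∀ A B : Finset α, A ⊆ B → f A ≤ f B) (hsub : Submodular f)
    (m : ℕ) (e : ℕ → α) (hinj : ∀ i < m, ∀ j < m, e i = e j → i = j)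
    (hSfeas : I ((Finset.range m).image e))
    (hstop : ∀ x : α, x ∉ (Finset.range m).image e →
      ¬ I (insert x ((Finset.range m).image e)))
    (hgreedy : ∀ i < m, ∀ x : α, I (insert x ((Finset.range i).image e)) →
      f (insert x ((Finset.range i).image e)) - f ((Finset.range i).image e) ≤
      f (insert (e i) ((Finset.range i).image e)) - f ((Finset.range i).image e))
    (C : Finset α) (hC : I C) :
    f ((Finset.range m).image e ∪ C) ≤ ((k : ℝ) + 1) * f ((Finset.range m).image e) ∧
    f C / ((k : ℝ) + 1) ≤ f ((Finset.range m).image e) :=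
  stmt8_general k I hI f hnn hmono hsub m e hSfeas hstop hgreedy C hC
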